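/- arXiv:1701.01985 — 4 statements merged into one kernel-verified Lean document; each statement's English description precedes it below -/
import Mathlib

section
/- Let α : ℤ^r → N be the surjection onto a lattice N given by α(e_i) = n_i, and let β : ℤ^r → P be the cokernel map of the dual map M → ℤ^r (M = Hom(N,ℤ)), with a_i = β(e_i*). Then n_1 is a primitive vector of N (i.e. there exists e ∈ M with ⟨n_1, e⟩ = ±1) if and only if the elements a_2,...,a_r generate the group P. -/
/-- In the lattice Gale transform setup, `n 0` is primitive iff the
remaining elements `a j = β (Pi.single j 1)`, `j ≠ 0`, generate the group `P`. -/
theorem stmt4 {N P : Type*} [AddCommGroup N] [Module ℤ N] [Module.Free ℤ N]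
    [Module.Finite ℤ N] [AddCommGroup P] {r : ℕ} [NeZero r] (n : Fin r → N)
    (hspan : ∀ e : N →ₗ[ℤ] ℤ, (∀ i, e (n i) = 0) → e = 0)
    (β : (Fin r → ℤ) →+ P) (hsurj : Function.Surjective β)
    (hker : ∀ v : Fin r → ℤ, β v = 0 ↔ ∃ e : N →ₗ[ℤ] ℤ, ∀ i, v i = e (n i)) :
    (∃ e : N →ₗ[ℤ] ℤ, e (n 0) = 1 ∨ e (n 0) = -1) ↔
      AddSubgroup.closure {p | ∃ j, j ≠ (0 : Fin r) ∧ β (Pi.single j 1) = p} = ⊤ := by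
  set S : AddSubgroup (Fin r → ℤ) := (Pi.evalAddMonoidHom (fun _ : Fin r => ℤ) 0).ker
    with hS
  have hSmem : ∀ v : Fin r → ℤ, v ∈ S ↔ v 0 = 0 := fun v => Iff.rfl
  have key : AddSubgroup.closure {p | ∃ j, j ≠ (0 : Fin r) ∧ β (Pi.single j 1) = p}
      = S.map β := by
    apply le_antisymm
    · rw [AddSubgroup.closure_le]
      rintro p ⟨j, hj, rfl⟩
      refine ⟨Pi.single j 1, ?_, rfl⟩
      show (Pi.single j 1 : Fin r → ℤ) 0 = 0
      exact Pi.single_eq_of_ne (Ne.symm hj) 1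
    · rintro p ⟨v, hv, rfl⟩
      have hv : v 0 = 0 := hv
      have hveq : v = ∑ j, Pi.single j (v j) := (Finset.univ_sum_single v).symm
      rw [hveq, map_sum]
      refine AddSubgroup.sum_mem _ (fun j _ => ?_)
      by_cases hj : j = 0
      · subst hj; rw [hv]; simpa using (AddSubgroup.closure {p | ∃ j, j ≠ (0 : Fin r) ∧ β (Pi.single j 1) = p}).zero_mem
      · have : Pi.single j (v j) = v j • (Pi.single j 1 : Fin r → ℤ) := by
          ext k
          by_cases hk : k = j
          · subst hk; simp
          · simp [Pi.single_eq_of_ne hk]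
        rw [this, map_zsmul]
        have hmem : β (Pi.single j 1) ∈ {p | ∃ j, j ≠ (0 : Fin r) ∧ β (Pi.single j 1) = p} :=
          ⟨j, hj, rfl⟩
        exact AddSubgroup.zsmul_mem _ (AddSubgroup.subset_closure hmem) _
  rw [key]
  constructor
  · rintro ⟨e, he⟩
    have hc : e (n 0) * e (n 0) = 1 := by rcases he with h | h <;> rw [h] <;> ring
    rw [AddSubgroup.eq_top_iff']
    intro p
    obtain ⟨v, rfl⟩ := hsurj p
    set u : Fin r → ℤ := fun i => e (n i) with hu
    have hbu : β u = 0 := (hker u).mpr ⟨e, fun i => rfl⟩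
    refine ⟨v - (e (n 0) * v 0) • u, ?_, ?_⟩
    · show (v - (e (n 0) * v 0) • u) 0 = 0
      simp only [Pi.sub_apply, Pi.smul_apply, hu, smul_eq_mul]
      linear_combination (-(v 0)) * hc
    · rw [map_sub, map_zsmul, hbu]
      simp
  · intro h
    have : β (Pi.single (0 : Fin r) 1) ∈ S.map β := h ▸ AddSubgroup.mem_top _
    obtain ⟨v, hv, hbv⟩ := this
    have hv : v 0 = 0 := hv
    have : β (Pi.single (0 : Fin r) 1 - v) = 0 := by rw [map_sub, hbv, sub_self]
    obtain ⟨e, he⟩ := (hker _).mp this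
    refine ⟨e, Or.inl ?_⟩
    have := he 0
    simp [hv] at this
    omega
end

section
/- With the lattice Gale transform setup, for a subset I ⊆ {1,...,r}, the vectors {n_i : i ∈ I} can be extended to a ℤ-basis of N if and only if for every i ∈ I the element a_i lies in the subgroup of P generated by {a_j : j ∉ I}. -/
/-!
Both sides say that the `n i`, `i ∈ I`, admit a dual family of functionals `eᵢ` with
`eᵢ (n j) = δᵢⱼ` for `j ∈ I`. On the lattice side, over a PID such a family splits
`N ≅ ker (eᵢ)ᵢ ⊕ ℤ^I`, and a basis of the free kernel completes the `n i` to a basis.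
On the Gale side, the subgroup generated by the `a j`, `j ∉ I`, is the image of the vectors
vanishing on `I`, so `a i` lies in it iff `δᵢ - w ∈ ker β = {(e (n j))ⱼ}` for such a `w`.
-/

def ExtendsToBasis (R : Type*) {N κ : Type*} [Semiring R] [AddCommMonoid N] [Module R N]
    (v : κ → N) : Prop :=
  ∃ (ι : Type) (b : Module.Basis ι R N) (f : κ → ι), Function.Injective f ∧ ∀ i, b (f i) = v i

theorem ExtendsToBasis.exists_coord {R N κ : Type*} [Semiring R] [AddCommMonoid N] [Module R N]
    [DecidableEq κ] {v : κ → N} (hv : ExtendsToBasis R v) (i : κ) :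
    ∃ e : N →ₗ[R] R, ∀ j, e (v j) = (Pi.single i 1 : κ → R) j := by
  obtain ⟨ι, b, f, hf, hbf⟩ := hv
  refine ⟨b.coord (f i), fun j => ?_⟩
  rw [← hbf, Module.Basis.coord_apply, Module.Basis.repr_self, Finsupp.single_apply_left hf,
    Finsupp.single_eq_pi_single, Pi.single_comm]

section PID

variable {R N : Type*} [CommRing R] [IsDomain R] [IsPrincipalIdealRing R] [AddCommGroup N]
  [Module R N] [Module.Free R N] [Module.Finite R N]

theorem extendsToBasis_of_comp_eq_single {κ : Type} [Fintype κ] [DecidableEq κ] {v : κ → N}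
    (q : N →ₗ[R] κ → R) (hq : ∀ i, q (v i) = Pi.single i 1) : ExtendsToBasis R v := by
  let s := Fintype.linearCombination R v
  have hqs : q ∘ₗ s = LinearMap.id := by ext i j; simp [s, hq]
  let e := ((LinearMap.exact_subtype_ker_map q).splitSurjectiveEquiv
    (LinearMap.ker q).injective_subtype ⟨s, hqs⟩).1
  refine ⟨_, ((Module.finBasis R (LinearMap.ker q)).prod (Pi.basisFun R κ)).map e.symm,
    Sum.inr, Sum.inr_injective, fun i => ?_⟩
  -- `e.symm` is, by construction, `(x, c) ↦ x + s c`
  have he : e.symm (0, Pi.single i 1) = (LinearMap.ker q).subtype 0 + s (Pi.single i 1) := rfl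
  simp [he, s]

theorem extendsToBasis_iff_forall_exists_coord {κ : Type} [Finite κ] [DecidableEq κ]
    (v : κ → N) :
    ExtendsToBasis R v ↔ ∀ i, ∃ e : N →ₗ[R] R, ∀ j, e (v j) = (Pi.single i 1 : κ → R) j := by
  refine ⟨ExtendsToBasis.exists_coord, fun h => ?_⟩
  choose e he using h
  have := Fintype.ofFinite κ
  exact extendsToBasis_of_comp_eq_single (LinearMap.pi e) fun j =>
    funext fun i => (he i j).trans (Pi.single_comm _ _ _)

end PID

section Gale

variable {ι : Type*} [Fintype ι] [DecidableEq ι]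

theorem mem_closure_image_pi_single_iff (J : Set ι) (w : ι → ℤ) :
    w ∈ AddSubgroup.closure ((fun j => Pi.single j 1) '' J) ↔ ∀ j ∉ J, w j = 0 := by
  constructor
  · intro hw
    induction hw using AddSubgroup.closure_induction with
    | mem x hx =>
      obtain ⟨k, hk, rfl⟩ := hx
      exact fun j hj => Pi.single_eq_of_ne (by rintro rfl; exact hj hk) _
    | zero => simp
    | add x y _ _ hx hy => intro j hj; simp [hx j hj, hy j hj]
    | neg x _ hx => intro j hj; simp [hx j hj]
  · intro hw
    rw [← Finset.univ_sum_single w]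
    refine AddSubgroup.sum_mem _ fun j _ => ?_
    by_cases hj : j ∈ J
    · rw [← mul_one (w j), ← smul_eq_mul, Pi.single_smul']
      exact AddSubgroup.zsmul_mem _ (AddSubgroup.subset_closure (Set.mem_image_of_mem _ hj)) _
    · simp [hw j hj]

theorem single_mem_closure_iff_exists_dual {N P : Type*} [AddCommGroup N] [Module ℤ N]
    [AddCommGroup P] {n : ι → N} {β : (ι → ℤ) →+ P}
    (hker : ∀ v : ι → ℤ, β v = 0 ↔ ∃ e : N →ₗ[ℤ] ℤ, ∀ i, v i = e (n i)) (I : Set ι) (i : ι) :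
    β (Pi.single i 1) ∈ AddSubgroup.closure {p | ∃ j, j ∉ I ∧ β (Pi.single j 1) = p} ↔
      ∃ e : N →ₗ[ℤ] ℤ, ∀ j ∈ I, e (n j) = (Pi.single i 1 : ι → ℤ) j := by
  have hset : {p | ∃ j, j ∉ I ∧ β (Pi.single j 1) = p} = β '' ((fun j => Pi.single j 1) '' Iᶜ) :=
    (Set.image_image _ _ _).symm
  simp only [hset, ← AddMonoidHom.map_closure, AddSubgroup.mem_map,
    mem_closure_image_pi_single_iff, Set.mem_compl_iff, not_not]
  constructor
  · rintro ⟨w, hw, hβw⟩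
    obtain ⟨e, he⟩ := (hker (Pi.single i 1 - w)).mp (by rw [map_sub, hβw, sub_self])
    exact ⟨e, fun j hj => by simpa [hw j hj] using (he j).symm⟩
  · rintro ⟨e, he⟩
    have hβe : β (fun j => e (n j)) = 0 := (hker _).mpr ⟨e, fun _ => rfl⟩
    refine ⟨Pi.single i 1 - fun j => e (n j), fun j hj => by simp [he j hj], ?_⟩
    rw [map_sub, hβe, sub_zero]

end Gale

theorem stmt5_general {N P : Type*} [AddCommGroup N] [Module ℤ N] [Module.Free ℤ N]
    [Module.Finite ℤ N] [AddCommGroup P] {r : ℕ} (n : Fin r → N)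
    (β : (Fin r → ℤ) →+ P)
    (hker : ∀ v : Fin r → ℤ, β v = 0 ↔ ∃ e : N →ₗ[ℤ] ℤ, ∀ i, v i = e (n i))
    (I : Set (Fin r)) :
    (∃ (ι : Type) (b : Module.Basis ι ℤ N) (f : I → ι),
        Function.Injective f ∧ ∀ i : I, b (f i) = n i) ↔
      ∀ i ∈ I, β (Pi.single i 1) ∈
        AddSubgroup.closure {p | ∃ j, j ∉ I ∧ β (Pi.single j 1) = p} := by
  change ExtendsToBasis ℤ (fun i : I => n i) ↔ _
  rw [extendsToBasis_iff_forall_exists_coord, Subtype.forall]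
  refine forall₂_congr fun i hi => ?_
  rw [single_mem_closure_iff_exists_dual hker]
  refine exists_congr fun e => Subtype.forall.trans (forall₂_congr fun j hj => ?_)
  simp [Pi.single_apply]

/-- In the lattice Gale transform setup, `{n i : i ∈ I}` can be completed
to a `ℤ`-basis of `N` iff every `a i`, `i ∈ I`, lies in the subgroup generated by the
`a j` with `j ∉ I`. -/
theorem stmt5 {N P : Type*} [AddCommGroup N] [Module ℤ N] [Module.Free ℤ N]
    [Module.Finite ℤ N] [AddCommGroup P] {r : ℕ} (n : Fin r → N)
    (hspan : ∀ e : N →ₗ[ℤ] ℤ, (∀ i, e (n i) = 0) → e = 0)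
    (β : (Fin r → ℤ) →+ P) (hsurj : Function.Surjective β)
    (hker : ∀ v : Fin r → ℤ, β v = 0 ↔ ∃ e : N →ₗ[ℤ] ℤ, ∀ i, v i = e (n i))
    (I : Set (Fin r)) :
    (∃ (ι : Type) (b : Module.Basis ι ℤ N) (f : I → ι),
        Function.Injective f ∧ ∀ i : I, b (f i) = n i) ↔
      ∀ i ∈ I, β (Pi.single i 1) ∈
        AddSubgroup.closure {p | ∃ j, j ∉ I ∧ β (Pi.single j 1) = p} :=
  stmt5_general n β hker I
end

section
/- A vector configuration {n_1,...,n_r} in a lattice N is suitable if and only if its lattice Gale transform A = {a_1,...,a_r} in P is an admissible collection, i.e., for each i the element a_i lies in the submonoid of P generated by {a_j : j ≠ i}. -/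
/-- A vector configuration is suitable iff its lattice Gale transform is an
admissible collection. -/
theorem stmt6 {N P : Type*} [AddCommGroup N] [Module ℤ N] [Module.Free ℤ N]
    [Module.Finite ℤ N] [AddCommGroup P] {r : ℕ} (n : Fin r → N)
    (hspan : ∀ e : N →ₗ[ℤ] ℤ, (∀ i, e (n i) = 0) → e = 0)
    (β : (Fin r → ℤ) →+ P) (hsurj : Function.Surjective β)
    (hker : ∀ v : Fin r → ℤ, β v = 0 ↔ ∃ e : N →ₗ[ℤ] ℤ, ∀ i, v i = e (n i)) :
    (∀ i, ∃ e : N →ₗ[ℤ] ℤ, e (n i) = -1 ∧ ∀ j, j ≠ i → 0 ≤ e (n j)) ↔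
      (AddSubgroup.closure (Set.range fun i => β (Pi.single i 1)) = ⊤ ∧
        ∀ i, β (Pi.single i 1) ∈
          AddSubmonoid.closure {p | ∃ j, j ≠ i ∧ β (Pi.single j 1) = p}) := by
  classical
  have key : ∀ v : Fin r → ℤ, β v = ∑ j, v j • β (Pi.single j 1) := by
    intro v
    have h2 : ∀ j : Fin r, β (Pi.single j (v j)) = v j • β (Pi.single j 1) := by
      intro j
      rw [← map_zsmul, ← Pi.single_smul, smul_eq_mul, mul_one]
    conv_lhs => rw [← Finset.univ_sum_single v]
    rw [map_sum]
    exact Finset.sum_congr rfl fun j _ => h2 j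
  constructor
  · intro hsuit
    constructor
    · rw [eq_top_iff]
      intro p _
      obtain ⟨v, rfl⟩ := hsurj p
      rw [key v]
      refine AddSubgroup.sum_mem _ fun j _ => AddSubgroup.zsmul_mem _ ?_ _
      exact AddSubgroup.subset_closure (Set.mem_range_self j)
    · intro i
      obtain ⟨e, he1, he2⟩ := hsuit i
      set w : Fin r → ℤ := fun j => if j = i then 0 else e (n j) with hw
      have h0 : β (Pi.single i 1 - w) = 0 := by
        rw [hker]
        refine ⟨-e, fun j => ?_⟩
        by_cases hj : j = i
        · subst hj
          simp [hw, he1]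
        · simp [hw, hj, Pi.single_eq_of_ne hj]
      have hβ : β (Pi.single i 1) = β w := by
        have h1 := map_sub β (Pi.single i 1) w
        rw [h0] at h1
        exact sub_eq_zero.mp h1.symm
      rw [hβ, key w]
      refine AddSubmonoid.sum_mem _ fun j _ => ?_
      by_cases hj : j = i
      · subst hj
        have hz : w j = 0 := by simp [hw]
        rw [hz, zero_smul]
        exact AddSubmonoid.zero_mem _
      · have hnn : 0 ≤ w j := by simpa [hw, hj] using he2 j hj
        have hsm : w j • β (Pi.single j 1) = (w j).toNat • β (Pi.single j 1) := by
          rw [← natCast_zsmul, Int.toNat_of_nonneg hnn]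
        rw [hsm]
        have hmem : β (Pi.single j 1) ∈
            ({p | ∃ k, k ≠ i ∧ β (Pi.single k 1) = p} : Set P) := ⟨j, hj, rfl⟩
        refine nsmul_mem ?_ _
        exact AddSubmonoid.subset_closure hmem
  · rintro ⟨-, hadm⟩
    intro i
    set S : AddSubmonoid P :=
      { carrier := {p | ∃ w : Fin r → ℤ, (∀ j, 0 ≤ w j) ∧ w i = 0 ∧ β w = p}
        zero_mem' := ⟨0, fun _ => le_refl 0, rfl, map_zero β⟩
        add_mem' := by
          rintro p q ⟨w, hw0, hwi, rfl⟩ ⟨w', hw'0, hw'i, rfl⟩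
          exact ⟨w + w', fun j => add_nonneg (hw0 j) (hw'0 j),
            by simp [hwi, hw'i], map_add β w w'⟩ } with hS
    have hsub : AddSubmonoid.closure {p | ∃ j, j ≠ i ∧ β (Pi.single j 1) = p} ≤ S := by
      rw [AddSubmonoid.closure_le]
      rintro p ⟨j, hji, rfl⟩
      refine ⟨Pi.single j 1, fun k => ?_, Pi.single_eq_of_ne (Ne.symm hji) 1, rfl⟩
      by_cases hk : k = j
      · subst hk; simp
      · simp [Pi.single_eq_of_ne hk]
    obtain ⟨w, hw0, hwi, hwβ⟩ := hsub (hadm i)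
    have h0 : β (Pi.single i 1 - w) = 0 := by
      rw [map_sub, hwβ, sub_self]
    obtain ⟨e, he⟩ := (hker _).mp h0
    refine ⟨-e, ?_, fun j hj => ?_⟩
    · have h1 := he i
      simp [hwi] at h1
      simp [← h1]
    · have h1 := he j
      rw [Pi.sub_apply, Pi.single_eq_of_ne hj] at h1
      simp only [LinearMap.neg_apply, ← neg_eq_iff_eq_neg]
      rw [show -e (n j) = w j by omega]
      exact hw0 j
end

section
/- Let n_1,...,n_r be a suitable vector configuration in a lattice N with lattice Gale transform (P, {a_1,...,a_r}), and let I ⊆ {1,...,r} be such that the submonoid generated by {a_j : j ∉ I} equals the full submonoid S generated by all a_j. Then for every i ∈ I there exists e ∈ Hom(N,ℤ) with ⟨n_i,e⟩ = -1, ⟨n_j,e⟩ ≥ 0 for all j ≠ i, and ⟨n_k,e⟩ = 0 for all k ∈ I with k ≠ i. -/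
/-!
Since `a_i` lies in the submonoid generated by the `a_j` with `j ∉ I`, we can write
`a_i = β v` with `v ≥ 0` supported off `I`. Then `v` minus the `i`-th basis vector lies in the
kernel of `β`, so it is `(⟨n_1, e⟩, …, ⟨n_r, e⟩)` for some `e ∈ Hom(N, ℤ)`; its coordinates are
`-1` at `i`, `0` on the rest of `I` and `≥ 0` everywhere else.
-/

lemma nonneg_and_eq_zero_of_mem_closure_single {ι R : Type*} [DecidableEq ι] [Semiring R]
    [PartialOrder R] [IsOrderedRing R] {J : Set ι} {v : ι → R}
    (hv : v ∈ AddSubmonoid.closure ((fun j => Pi.single j (1 : R)) '' J)) :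
    0 ≤ v ∧ ∀ k ∉ J, v k = 0 := by
  induction hv using AddSubmonoid.closure_induction with
  | mem _ hx =>
    obtain ⟨j, hj, rfl⟩ := hx
    exact ⟨Pi.single_nonneg.2 zero_le_one,
      fun k hk => Pi.single_eq_of_ne (ne_of_mem_of_not_mem hj hk).symm _⟩
  | zero => exact ⟨le_rfl, fun _ _ => rfl⟩
  | add _ _ _ _ hx hy =>
    exact ⟨add_nonneg hx.1 hy.1, fun k hk => by simp [hx.2 k hk, hy.2 k hk]⟩

lemma exists_nonneg_of_mem_closure_image_single {ι R P : Type*} [DecidableEq ι] [Semiring R]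
    [PartialOrder R] [IsOrderedRing R] [AddCommMonoid P] (β : (ι → R) →+ P) {J : Set ι} {p : P}
    (hp : p ∈ AddSubmonoid.closure ((fun j => β (Pi.single j 1)) '' J)) :
    ∃ v : ι → R, 0 ≤ v ∧ (∀ k ∉ J, v k = 0) ∧ β v = p := by
  rw [← Set.image_image β, ← AddMonoidHom.map_mclosure] at hp
  obtain ⟨v, hv, rfl⟩ := hp
  obtain ⟨hv0, hvJ⟩ := nonneg_and_eq_zero_of_mem_closure_single hv
  exact ⟨v, hv0, hvJ, rfl⟩

theorem stmt12_general {N P : Type*} [AddCommGroup N] [Module ℤ N] [AddCommGroup P] {r : ℕ}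
    (n : Fin r → N) (β : (Fin r → ℤ) →+ P)
    (hker : ∀ v : Fin r → ℤ, β v = 0 ↔ ∃ e : N →ₗ[ℤ] ℤ, ∀ i, v i = e (n i))
    (I : Set (Fin r))
    (hI : AddSubmonoid.closure {p | ∃ j, j ∉ I ∧ β (Pi.single j 1) = p}
        = AddSubmonoid.closure (Set.range fun j => β (Pi.single j 1))) :
    ∀ i ∈ I, ∃ e : N →ₗ[ℤ] ℤ, e (n i) = -1 ∧ (∀ j, j ≠ i → 0 ≤ e (n j)) ∧
      ∀ k ∈ I, k ≠ i → e (n k) = 0 := by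
  intro i hi
  have hai : β (Pi.single i 1) ∈ AddSubmonoid.closure ((fun j => β (Pi.single j 1)) '' Iᶜ) :=
    hI ▸ AddSubmonoid.subset_closure ⟨i, rfl⟩
  obtain ⟨v, hv0, hvI, hv⟩ := exists_nonneg_of_mem_closure_image_single β hai
  obtain ⟨e, he⟩ := (hker _).1 (show β (v - Pi.single i 1) = 0 by rw [map_sub, hv, sub_self])
  refine ⟨e, ?_, fun j hj => ?_, fun k hk hki => ?_⟩ <;> rw [← he]
  · simp [hvI i (Set.notMem_compl_iff.2 hi)]
  · simpa [Pi.single_eq_of_ne hj] using hv0 j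
  · simp [Pi.single_eq_of_ne hki, hvI k (Set.notMem_compl_iff.2 hk)]

/-- For a suitable configuration with lattice Gale transform `(P, a)` and a
subset `I` such that the `a j`, `j ∉ I`, generate the full submonoid `S`, every `i ∈ I`
admits `e ∈ Hom(N,ℤ)` with `⟨n i, e⟩ = -1`, `⟨n j, e⟩ ≥ 0` for `j ≠ i`, and
`⟨n k, e⟩ = 0` for `k ∈ I`, `k ≠ i`. -/
theorem stmt12 {N P : Type*} [AddCommGroup N] [Module ℤ N] [Module.Free ℤ N]
    [Module.Finite ℤ N] [AddCommGroup P] {r : ℕ} (n : Fin r → N)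
    (hspan : ∀ e : N →ₗ[ℤ] ℤ, (∀ i, e (n i) = 0) → e = 0)
    (β : (Fin r → ℤ) →+ P) (hsurj : Function.Surjective β)
    (hker : ∀ v : Fin r → ℤ, β v = 0 ↔ ∃ e : N →ₗ[ℤ] ℤ, ∀ i, v i = e (n i))
    (hsuit : ∀ i, ∃ e : N →ₗ[ℤ] ℤ, e (n i) = -1 ∧ ∀ j, j ≠ i → 0 ≤ e (n j))
    (I : Set (Fin r))
    (hI : AddSubmonoid.closure {p | ∃ j, j ∉ I ∧ β (Pi.single j 1) = p}
        = AddSubmonoid.closure (Set.range fun j => β (Pi.single j 1))) :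
    ∀ i ∈ I, ∃ e : N →ₗ[ℤ] ℤ, e (n i) = -1 ∧ (∀ j, j ≠ i → 0 ≤ e (n j)) ∧
      ∀ k ∈ I, k ≠ i → e (n k) = 0 :=
  stmt12_general n β hker I hI
end
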